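/- Let f1, f2, f3 be real-valued continuous functions defined respectively in open neighborhoods of points k*1, k*2, and δ1·k*1 + δ2·k*2 in R^d, where δ1, δ2 are nonzero real constants and C0 is a real constant. If f1(k1) + f2(k2) = f3(δ1·k1 + δ2·k2) + C0 holds for all k1, k2 in these neighborhoods, then f1, f2, f3 are affine (linear plus constant) functions in neighborhoods of k*1, k*2, δ1·k*1 + δ2·k*2 respectively. -/

import Mathlib

open Metric

lemma local_additive_linear {d : ℕ} (χ : EuclideanSpace ℝ (Fin d) → ℝ) (ε : ℝ) (hε : 0 < ε)
    (hadd : ∀ u v : EuclideanSpace ℝ (Fin d), ‖u‖ ≤ ε → ‖v‖ ≤ ε → χ (u + v) = χ u + χ v)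
    (hcont : ContinuousOn χ (closedBall 0 ε)) :
    ∃ a : EuclideanSpace ℝ (Fin d), ∀ w, ‖w‖ ≤ ε → χ w = (inner ℝ a w : ℝ) := by
  have χ0 : χ 0 = 0 := by
    have := hadd 0 0 (by simp [hε.le]) (by simp [hε.le])
    simp at this; linarith
  -- natural multiples
  have hnat : ∀ (n : ℕ) (u : EuclideanSpace ℝ (Fin d)), (n : ℝ) * ‖u‖ ≤ ε → ‖u‖ ≤ ε →
      χ ((n : ℝ) • u) = n * χ u := by
    intro n
    induction n with
    | zero => intro u _ _; simp [χ0]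
    | succ n ih =>
      intro u hn hu
      have hn' : (n : ℝ) * ‖u‖ ≤ ε := by
        have : (n : ℝ) * ‖u‖ ≤ (n + 1 : ℝ) * ‖u‖ := by nlinarith [norm_nonneg u]
        push_cast at hn ⊢; linarith
      have hnorm : ‖(n : ℝ) • u‖ ≤ ε := by
        rw [norm_smul, Real.norm_natCast]; exact hn'
      have : χ ((n : ℝ) • u + u) = χ ((n : ℝ) • u) + χ u := hadd _ _ hnorm hu
      have h2 : ((n : ℝ) + 1) • u = (n : ℝ) • u + u := by
        rw [add_smul, one_smul]
      push_cast
      rw [h2, this, ih u hn' hu]; ring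
  -- well-definedness of the extension
  have hwd : ∀ (N M : ℕ), 1 ≤ N → 1 ≤ M → ∀ w : EuclideanSpace ℝ (Fin d),
      ‖w‖ ≤ N * ε → ‖w‖ ≤ M * ε →
      (N : ℝ) * χ ((N : ℝ)⁻¹ • w) = (M : ℝ) * χ ((M : ℝ)⁻¹ • w) := by
    have key : ∀ (N M : ℕ), 1 ≤ N → 1 ≤ M → ∀ w : EuclideanSpace ℝ (Fin d), ‖w‖ ≤ N * ε →
        χ ((N : ℝ)⁻¹ • w) = (M : ℝ) * χ (((N : ℝ) * M)⁻¹ • w) := by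
      intro N M hN hM w hw
      have hN0 : (0 : ℝ) < N := by exact_mod_cast hN
      have hM0 : (0 : ℝ) < M := by exact_mod_cast hM
      have hM1 : (1 : ℝ) ≤ (M : ℝ) := by exact_mod_cast hM
      have hkey2 : (M : ℝ) * ((N : ℝ) * M)⁻¹ = (N : ℝ)⁻¹ := by field_simp
      have h1 : (M : ℝ) * ‖((N : ℝ) * M)⁻¹ • w‖ ≤ ε := by
        rw [norm_smul, Real.norm_eq_abs, abs_inv, abs_of_pos (by positivity),
          ← mul_assoc, hkey2, inv_mul_le_iff₀ hN0]
        linarith [hw]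
      have h2 : ‖((N : ℝ) * M)⁻¹ • w‖ ≤ ε := by
        nlinarith [norm_nonneg (((N : ℝ) * M)⁻¹ • w)]
      have := hnat M (((N : ℝ) * M)⁻¹ • w) h1 h2
      rw [smul_smul] at this
      rw [hkey2] at this
      rw [this]
    intro N M hN hM w hwN hwM
    rw [key N M hN hM w hwN, key M N hM hN w hwM]
    have : ((N : ℝ) * M)⁻¹ = ((M : ℝ) * N)⁻¹ := by ring_nf
    rw [this]; ring
  -- the global extension
  set Nf : EuclideanSpace ℝ (Fin d) → ℕ := fun w => ⌈‖w‖ / ε⌉₊ + 1 with hNf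
  have hNf1 : ∀ w, 1 ≤ Nf w := fun w => Nat.le_add_left 1 _
  have hbound : ∀ w : EuclideanSpace ℝ (Fin d), ‖w‖ ≤ (Nf w : ℝ) * ε := by
    intro w
    have h1 : ‖w‖ / ε ≤ (⌈‖w‖ / ε⌉₊ : ℝ) := Nat.le_ceil _
    have : (⌈‖w‖ / ε⌉₊ : ℝ) ≤ (Nf w : ℝ) := by simp [hNf]
    rw [div_le_iff₀ hε] at h1
    nlinarith
  set T : EuclideanSpace ℝ (Fin d) → ℝ := fun w => (Nf w : ℝ) * χ ((Nf w : ℝ)⁻¹ • w) with hT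
  have hTN : ∀ (w : EuclideanSpace ℝ (Fin d)) (N : ℕ), 1 ≤ N → ‖w‖ ≤ N * ε →
      T w = (N : ℝ) * χ ((N : ℝ)⁻¹ • w) :=
    fun w N hN hw => hwd (Nf w) N (hNf1 w) hN w (hbound w) hw
  -- additivity of T
  have Tadd : ∀ u v, T (u + v) = T u + T v := by
    intro u v
    set N : ℕ := Nf u + Nf v + Nf (u + v) with hN
    have hN1 : ∀ m : ℕ, Nf u ≤ N ∨ True := fun _ => Or.inr trivial
    have hmono : ∀ (w : EuclideanSpace ℝ (Fin d)), Nf w ≤ N → ‖w‖ ≤ (N : ℝ) * ε := by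
      intro w h
      calc ‖w‖ ≤ (Nf w : ℝ) * ε := hbound w
        _ ≤ (N : ℝ) * ε := by
            have : (Nf w : ℝ) ≤ (N : ℝ) := by exact_mod_cast h
            nlinarith
    have hNpos : 1 ≤ N := le_trans (hNf1 u) (by omega)
    have hN0 : (0 : ℝ) < N := by exact_mod_cast hNpos
    have hu : ‖u‖ ≤ (N : ℝ) * ε := hmono u (by omega)
    have hv : ‖v‖ ≤ (N : ℝ) * ε := hmono v (by omega)
    have huv : ‖u + v‖ ≤ (N : ℝ) * ε := hmono (u + v) (by omega)
    rw [hTN u N hNpos hu, hTN v N hNpos hv, hTN (u + v) N hNpos huv]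
    have hsmall : ∀ w : EuclideanSpace ℝ (Fin d), ‖w‖ ≤ (N : ℝ) * ε → ‖(N : ℝ)⁻¹ • w‖ ≤ ε := by
      intro w hw
      rw [norm_smul, Real.norm_eq_abs, abs_inv, abs_of_pos hN0, inv_mul_le_iff₀ hN0]
      linarith [hw]
    rw [smul_add, hadd _ _ (hsmall u hu) (hsmall v hv)]
    ring
  -- continuity of T
  have Tcont : Continuous T := by
    rw [continuous_iff_continuousAt]
    intro w₀
    set N : ℕ := Nf w₀ + ⌈1 / ε⌉₊ + 1 with hN
    have hNpos : 1 ≤ N := by omega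
    have hN0 : (0 : ℝ) < N := by exact_mod_cast hNpos
    have hNbig : ‖w₀‖ + 1 ≤ (N : ℝ) * ε := by
      have h1 : ‖w₀‖ ≤ (Nf w₀ : ℝ) * ε := hbound w₀
      have h2 : 1 / ε ≤ (⌈1 / ε⌉₊ : ℝ) := Nat.le_ceil _
      have h3 : 1 ≤ (⌈1 / ε⌉₊ : ℝ) * ε := by
        rw [div_le_iff₀ hε] at h2; linarith
      have : (N : ℝ) = (Nf w₀ : ℝ) + (⌈1 / ε⌉₊ : ℝ) + 1 := by push_cast [hN]; ring
      nlinarith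
    have heqloc : ∀ w ∈ ball w₀ 1, T w = (N : ℝ) * χ ((N : ℝ)⁻¹ • w) := by
      intro w hw
      apply hTN w N hNpos
      have : ‖w‖ < ‖w₀‖ + 1 := by
        have := mem_ball_iff_norm.mp hw
        calc ‖w‖ ≤ ‖w₀‖ + ‖w - w₀‖ := by simpa using norm_add_le w₀ (w - w₀)
          _ < ‖w₀‖ + 1 := by linarith
      linarith
    have hg : ContinuousAt (fun w => (N : ℝ) * χ ((N : ℝ)⁻¹ • w)) w₀ := by
      apply ContinuousAt.mul continuousAt_const
      apply ContinuousAt.comp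
      · apply hcont.continuousAt
        apply Filter.mem_of_superset _ ball_subset_closedBall
        apply isOpen_ball.mem_nhds
        rw [mem_ball_zero_iff, norm_smul, Real.norm_eq_abs, abs_inv, abs_of_pos hN0,
          inv_mul_lt_iff₀ hN0]
        nlinarith [hNbig, norm_nonneg w₀]
      · exact (continuous_const_smul _).continuousAt
    apply hg.congr
    filter_upwards [isOpen_ball.mem_nhds (mem_ball_self one_pos)] with w hw
    exact (heqloc w hw).symm
  -- linearity
  set Thom : EuclideanSpace ℝ (Fin d) →+ ℝ := AddMonoidHom.mk' T Tadd with hThom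
  set Tlin : EuclideanSpace ℝ (Fin d) →L[ℝ] ℝ := Thom.toRealLinearMap Tcont with hTlin
  refine ⟨(InnerProductSpace.toDual ℝ (EuclideanSpace ℝ (Fin d))).symm Tlin, ?_⟩
  intro w hw
  have h1 : (inner ℝ ((InnerProductSpace.toDual ℝ (EuclideanSpace ℝ (Fin d))).symm Tlin) w : ℝ)
      = Tlin w := InnerProductSpace.toDual_symm_apply
  rw [h1]
  have h2 : Tlin w = T w := rfl
  rw [h2, hTN w 1 le_rfl (by simpa using hw)]
  simp


theorem stmt0 {d : ℕ} (f1 f2 f3 : EuclideanSpace ℝ (Fin d) → ℝ)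
    (k1s k2s : EuclideanSpace ℝ (Fin d)) (δ1 δ2 C0 : ℝ) (hδ : δ1 * δ2 ≠ 0)
    (U1 U2 U3 : Set (EuclideanSpace ℝ (Fin d)))
    (hU1 : U1 ∈ nhds k1s) (hU2 : U2 ∈ nhds k2s) (hU3 : U3 ∈ nhds (δ1 • k1s + δ2 • k2s))
    (hc1 : ContinuousOn f1 U1) (hc2 : ContinuousOn f2 U2) (hc3 : ContinuousOn f3 U3)
    (heq : ∀ k1 ∈ U1, ∀ k2 ∈ U2, f1 k1 + f2 k2 = f3 (δ1 • k1 + δ2 • k2) + C0) :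
    (∃ V1 ∈ nhds k1s, ∃ (a : EuclideanSpace ℝ (Fin d)) (b : ℝ),
      ∀ k ∈ V1, f1 k = (inner ℝ a k : ℝ) + b) ∧
    (∃ V2 ∈ nhds k2s, ∃ (a : EuclideanSpace ℝ (Fin d)) (b : ℝ),
      ∀ k ∈ V2, f2 k = (inner ℝ a k : ℝ) + b) ∧
    (∃ V3 ∈ nhds (δ1 • k1s + δ2 • k2s), ∃ (a : EuclideanSpace ℝ (Fin d)) (b : ℝ),
      ∀ k ∈ V3, f3 k = (inner ℝ a k : ℝ) + b) := by
  obtain ⟨hδ1, hδ2⟩ := mul_ne_zero_iff.mp hδ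
  have hδ1' : 0 < |δ1| := abs_pos.mpr hδ1
  have hδ2' : 0 < |δ2| := abs_pos.mpr hδ2
  set k3s : EuclideanSpace ℝ (Fin d) := δ1 • k1s + δ2 • k2s with hk3s
  obtain ⟨r1, hr1, hb1⟩ := Metric.mem_nhds_iff.mp hU1
  obtain ⟨r2, hr2, hb2⟩ := Metric.mem_nhds_iff.mp hU2
  obtain ⟨r3, hr3, hb3⟩ := Metric.mem_nhds_iff.mp hU3
  set ε : ℝ := min (r1 * |δ1|) (min (r2 * |δ2|) r3) / 3 with hεdef
  have hε : 0 < ε := by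
    apply div_pos _ (by norm_num)
    exact lt_min (by positivity) (lt_min (by positivity) hr3)
  -- membership lemmas
  have hmem1 : ∀ u : EuclideanSpace ℝ (Fin d), ‖u‖ ≤ ε → k1s + δ1⁻¹ • u ∈ U1 := by
    intro u hu
    apply hb1
    rw [Metric.mem_ball, dist_eq_norm, add_sub_cancel_left, norm_smul, Real.norm_eq_abs, abs_inv]
    rw [inv_mul_lt_iff₀ hδ1']
    have : ε ≤ r1 * |δ1| / 3 := by
      apply div_le_div_of_nonneg_right (min_le_left _ _) (by norm_num)
    nlinarith
  have hmem2 : ∀ v : EuclideanSpace ℝ (Fin d), ‖v‖ ≤ ε → k2s + δ2⁻¹ • v ∈ U2 := by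
    intro v hv
    apply hb2
    rw [Metric.mem_ball, dist_eq_norm, add_sub_cancel_left, norm_smul, Real.norm_eq_abs, abs_inv]
    rw [inv_mul_lt_iff₀ hδ2']
    have : ε ≤ r2 * |δ2| / 3 := by
      apply div_le_div_of_nonneg_right (le_trans (min_le_right _ _) (min_le_left _ _)) (by norm_num)
    nlinarith
  have hmem3 : ∀ w : EuclideanSpace ℝ (Fin d), ‖w‖ ≤ 2 * ε → k3s + w ∈ U3 := by
    intro w hw
    apply hb3
    rw [Metric.mem_ball, dist_eq_norm, add_sub_cancel_left]
    have : ε ≤ r3 / 3 := by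
      apply div_le_div_of_nonneg_right (le_trans (min_le_right _ _) (min_le_right _ _)) (by norm_num)
    linarith
  -- the combination identity
  have hcomb : ∀ u v : EuclideanSpace ℝ (Fin d),
      δ1 • (k1s + δ1⁻¹ • u) + δ2 • (k2s + δ2⁻¹ • v) = k3s + (u + v) := by
    intro u v
    rw [smul_add, smul_add, smul_smul, smul_smul, mul_inv_cancel₀ hδ1, mul_inv_cancel₀ hδ2,
      one_smul, one_smul, hk3s]
    abel
  have hE : ∀ u v : EuclideanSpace ℝ (Fin d), ‖u‖ ≤ ε → ‖v‖ ≤ ε →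
      f1 (k1s + δ1⁻¹ • u) + f2 (k2s + δ2⁻¹ • v) = f3 (k3s + (u + v)) + C0 := by
    intro u v hu hv
    rw [← hcomb u v]
    exact heq _ (hmem1 u hu) _ (hmem2 v hv)
  set χ : EuclideanSpace ℝ (Fin d) → ℝ := fun w => f3 (k3s + w) - f3 k3s with hχ
  have hE0 : f1 k1s + f2 k2s = f3 k3s + C0 := by
    have := hE 0 0 (by simp [hε.le]) (by simp [hε.le])
    simpa using this
  have hE1 : ∀ u : EuclideanSpace ℝ (Fin d), ‖u‖ ≤ ε →
      f1 (k1s + δ1⁻¹ • u) = χ u + f3 k3s + C0 - f2 k2s := by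
    intro u hu
    have := hE u 0 hu (by simp [hε.le])
    simp only [smul_zero, add_zero] at this
    simp only [hχ]
    linarith
  have hE2 : ∀ v : EuclideanSpace ℝ (Fin d), ‖v‖ ≤ ε →
      f2 (k2s + δ2⁻¹ • v) = χ v + f3 k3s + C0 - f1 k1s := by
    intro v hv
    have := hE 0 v (by simp [hε.le]) hv
    simp only [smul_zero, add_zero, zero_add] at this
    simp only [hχ]
    linarith
  have hadd : ∀ u v : EuclideanSpace ℝ (Fin d), ‖u‖ ≤ ε → ‖v‖ ≤ ε → χ (u + v) = χ u + χ v := by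
    intro u v hu hv
    have h1 := hE u v hu hv
    have h2 := hE1 u hu
    have h3 := hE2 v hv
    rw [h2, h3] at h1
    simp only [hχ] at h1 ⊢
    linarith [hE0]
  have hcont : ContinuousOn χ (Metric.closedBall 0 ε) := by
    apply ContinuousOn.sub _ continuousOn_const
    apply ContinuousOn.comp hc3 (Continuous.continuousOn (continuous_const.add continuous_id))
    intro w hw
    exact hmem3 w (by rw [Metric.mem_closedBall, dist_zero_right] at hw; linarith)
  obtain ⟨a, ha⟩ := local_additive_linear χ ε hε hadd hcont
  refine ⟨?_, ?_, ?_⟩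
  · refine ⟨Metric.ball k1s (ε / |δ1|), Metric.ball_mem_nhds _ (by positivity), δ1 • a,
      f3 k3s + C0 - f2 k2s - δ1 * (inner ℝ a k1s : ℝ), ?_⟩
    intro k hk
    set u : EuclideanSpace ℝ (Fin d) := δ1 • (k - k1s) with hu
    have hun : ‖u‖ ≤ ε := by
      rw [hu, norm_smul, Real.norm_eq_abs]
      rw [Metric.mem_ball, dist_eq_norm] at hk
      have := (lt_div_iff₀ hδ1').mp hk
      nlinarith
    have hku : k1s + δ1⁻¹ • u = k := by
      rw [hu, smul_smul, inv_mul_cancel₀ hδ1, one_smul, add_sub_cancel]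
    have := hE1 u hun
    rw [hku, ha u hun] at this
    rw [this, hu]
    rw [real_inner_smul_right, inner_sub_right, real_inner_smul_left]
    ring
  · refine ⟨Metric.ball k2s (ε / |δ2|), Metric.ball_mem_nhds _ (by positivity), δ2 • a,
      f3 k3s + C0 - f1 k1s - δ2 * (inner ℝ a k2s : ℝ), ?_⟩
    intro k hk
    set v : EuclideanSpace ℝ (Fin d) := δ2 • (k - k2s) with hv
    have hvn : ‖v‖ ≤ ε := by
      rw [hv, norm_smul, Real.norm_eq_abs]
      rw [Metric.mem_ball, dist_eq_norm] at hk
      have := (lt_div_iff₀ hδ2').mp hk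
      nlinarith
    have hkv : k2s + δ2⁻¹ • v = k := by
      rw [hv, smul_smul, inv_mul_cancel₀ hδ2, one_smul, add_sub_cancel]
    have := hE2 v hvn
    rw [hkv, ha v hvn] at this
    rw [this, hv]
    rw [real_inner_smul_right, inner_sub_right, real_inner_smul_left]
    ring
  · refine ⟨Metric.ball k3s ε, Metric.ball_mem_nhds _ hε, a,
      f3 k3s - (inner ℝ a k3s : ℝ), ?_⟩
    intro k hk
    have hw : ‖k - k3s‖ ≤ ε := by
      rw [Metric.mem_ball, dist_eq_norm] at hk
      linarith
    have h1 := ha (k - k3s) hw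
    simp only [hχ] at h1
    rw [add_sub_cancel] at h1
    rw [inner_sub_right] at h1
    linarith
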